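/- For every even-cyclic L^∘-grammar Gr, the following inclusions hold: L(Gr^u) ⊆ L(Gr) ⊆ L((Gr^u)^{CS}), where Gr^u is the L^∘-grammar obtained from Gr by deleting all occurrences of the connective ^∘ from the distinguished type and from all types in the dictionary, and (Gr^u)^{CS} is the same grammar as Gr^u but considered as an (L+(CS))-grammar. -/

import Mathlib

/-- Types of the Lambek calculus with the cyclic shift `L^∘`, built from
primitive types `P` by `\` (`ldiv A B = A \ B`), `/` (`rdiv B A = B / A`),
`·` (`mul`) and the cyclic shift `^∘` (`circ`). -/
inductive Fm (P : Type) : Type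
  | prim : P → Fm P
  | ldiv : Fm P → Fm P → Fm P
  | rdiv : Fm P → Fm P → Fm P
  | mul  : Fm P → Fm P → Fm P
  | circ : Fm P → Fm P
deriving DecidableEq

open Fm

/-- Derivability of sequents in the Lambek calculus with the cyclic shift `L^∘`.
The Boolean flag indicates whether the rule (cut) may be used:
`Dv P true` is `L^∘` (with cut), `Dv P false` is its cut-free part. -/
inductive Dv (P : Type) : Bool → List (Fm P) → Fm P → Prop
  | ax (c : Bool) (A : Fm P) :
      Dv P c [A] A
  | ldivL (c : Bool) (Γ Δ Pi : List (Fm P)) (A B C : Fm P) :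
      Dv P c (Γ ++ B :: Δ) C → Dv P c Pi A → Pi ≠ [] →
      Dv P c (Γ ++ Pi ++ ldiv A B :: Δ) C
  | ldivR (c : Bool) (Pi : List (Fm P)) (A B : Fm P) :
      Dv P c (A :: Pi) B → Pi ≠ [] →
      Dv P c Pi (ldiv A B)
  | rdivL (c : Bool) (Γ Δ Pi : List (Fm P)) (A B C : Fm P) :
      Dv P c (Γ ++ B :: Δ) C → Dv P c Pi A → Pi ≠ [] →
      Dv P c (Γ ++ rdiv B A :: (Pi ++ Δ)) C
  | rdivR (c : Bool) (Pi : List (Fm P)) (A B : Fm P) :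
      Dv P c (Pi ++ [A]) B → Pi ≠ [] →
      Dv P c Pi (rdiv B A)
  | mulL (c : Bool) (Γ Δ : List (Fm P)) (A B C : Fm P) :
      Dv P c (Γ ++ A :: B :: Δ) C →
      Dv P c (Γ ++ mul A B :: Δ) C
  | mulR (c : Bool) (Pi Psi : List (Fm P)) (A B : Fm P) :
      Dv P c Pi A → Dv P c Psi B → Pi ≠ [] → Psi ≠ [] →
      Dv P c (Pi ++ Psi) (mul A B)
  | circR (c : Bool) (Pi : List (Fm P)) (A : Fm P) :
      Dv P c Pi A →
      Dv P c Pi (circ A)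
  | circL (c : Bool) (A B : Fm P) :
      Dv P c [B] (circ A) →
      Dv P c [circ B] (circ A)
  | circC (c : Bool) (Pi Psi : List (Fm P)) (A : Fm P) :
      Dv P c (Pi ++ Psi) (circ A) → Pi ≠ [] → Psi ≠ [] →
      Dv P c (Psi ++ Pi) (circ A)
  | cut (Γ Δ Pi : List (Fm P)) (A B : Fm P) :
      Dv P true Pi A → Dv P true (Γ ++ A :: Δ) B → Pi ≠ [] →
      Dv P true (Γ ++ Pi ++ Δ) B

/-- `cyclicOK true A` says that `A` is even-cyclic (no odd subtype occurrence
of the form `B^∘`); `cyclicOK false A` says that `A` is odd-cyclic (no even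
subtype occurrence of the form `B^∘`).  Recall `ldiv A B = A \ B` and
`rdiv B A = B / A`, so the first argument of `ldiv` and the second argument of
`rdiv` are the denominators, where parity flips. -/
def cyclicOK {P : Type} : Bool → Fm P → Prop
  | _, Fm.prim _ => True
  | b, Fm.ldiv A B => cyclicOK (!b) A ∧ cyclicOK b B
  | b, Fm.rdiv B A => cyclicOK b B ∧ cyclicOK (!b) A
  | b, Fm.mul A B => cyclicOK b A ∧ cyclicOK b B
  | b, Fm.circ A => b = true ∧ cyclicOK b A

/-- The language recognized by a categorial grammar based on a calculus with
derivability relation `K`: the grammar has distinguished type `S` and finite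
dictionary `R` (a list of pairs `(a, T)` meaning `a ▷ T`); a nonempty word
`a1…an` is recognized iff there are types `T1,…,Tn` with `ai ▷ Ti` and
`K ⊢ T1,…,Tn → S`. -/
def GLang {α Ty : Type} (K : List Ty → Ty → Prop) (S : Ty) (R : List (α × Ty)) :
    Set (List α) :=
  { w | w ≠ [] ∧ ∃ Ts : List Ty, List.Forall₂ (fun a T => (a, T) ∈ R) w Ts ∧ K Ts S }

/-- The permutation closure `perm(L)` of a language `L`: all words obtained by
permuting the letters of a word of `L`. -/
def permClosure {α : Type} (L : Set (List α)) : Set (List α) :=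
  { w | ∃ v ∈ L, w.Perm v }

/-- Derivability in the calculus `L+(CS)` (the Lambek calculus with cut plus
the structural rule (CS)), here formulated over the same set of types; note
that it has no rules for `^∘`, and it is applied below only to `^∘`-free
types. -/
inductive DvCS (P : Type) : List (Fm P) → Fm P → Prop
  | ax (A : Fm P) :
      DvCS P [A] A
  | ldivL (Γ Δ Pi : List (Fm P)) (A B C : Fm P) :
      DvCS P (Γ ++ B :: Δ) C → DvCS P Pi A → Pi ≠ [] →
      DvCS P (Γ ++ Pi ++ Fm.ldiv A B :: Δ) C
  | ldivR (Pi : List (Fm P)) (A B : Fm P) :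
      DvCS P (A :: Pi) B → Pi ≠ [] →
      DvCS P Pi (Fm.ldiv A B)
  | rdivL (Γ Δ Pi : List (Fm P)) (A B C : Fm P) :
      DvCS P (Γ ++ B :: Δ) C → DvCS P Pi A → Pi ≠ [] →
      DvCS P (Γ ++ Fm.rdiv B A :: (Pi ++ Δ)) C
  | rdivR (Pi : List (Fm P)) (A B : Fm P) :
      DvCS P (Pi ++ [A]) B → Pi ≠ [] →
      DvCS P Pi (Fm.rdiv B A)
  | mulL (Γ Δ : List (Fm P)) (A B C : Fm P) :
      DvCS P (Γ ++ A :: B :: Δ) C →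
      DvCS P (Γ ++ Fm.mul A B :: Δ) C
  | mulR (Pi Psi : List (Fm P)) (A B : Fm P) :
      DvCS P Pi A → DvCS P Psi B → Pi ≠ [] → Psi ≠ [] →
      DvCS P (Pi ++ Psi) (Fm.mul A B)
  | cs (Pi Psi : List (Fm P)) (A : Fm P) :
      DvCS P (Pi ++ Psi) A → Pi ≠ [] → Psi ≠ [] →
      DvCS P (Psi ++ Pi) A
  | cut (Γ Δ Pi : List (Fm P)) (A B : Fm P) :
      DvCS P Pi A → DvCS P (Γ ++ A :: Δ) B → Pi ≠ [] →
      DvCS P (Γ ++ Pi ++ Δ) B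

/-- `unneck A` (`A^u`) deletes all occurrences of the connective `^∘` from `A`. -/
def unneck {P : Type} : Fm P → Fm P
  | Fm.prim p => Fm.prim p
  | Fm.ldiv A B => Fm.ldiv (unneck A) (unneck B)
  | Fm.rdiv A B => Fm.rdiv (unneck A) (unneck B)
  | Fm.mul A B => Fm.mul (unneck A) (unneck B)
  | Fm.circ A => unneck A


/-!
By simultaneous induction on types, `A → A^u` is derivable in `L^∘` for odd-cyclic `A` and
`A^u → A` for even-cyclic `A`: the connective `^∘` occurs only in positions where `(→∘)`
introduces it. Cutting these sequents into a derivation of `T₁^u, …, Tₙ^u → S^u` yields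
`T₁, …, Tₙ → S`. Conversely, erasing `^∘` from an `L^∘`-derivation turns `(→∘)` and `(∘→)`
into repetitions and `(∘)` into `(CS)`, hence gives an `L+(CS)`-derivation.
-/

namespace Dv

variable {P : Type}

theorem ne_nil {c : Bool} {Γ : List (Fm P)} {A : Fm P} (h : Dv P c Γ A) : Γ ≠ [] := by
  induction h <;> simp_all

theorem unneck_of_cyclicOK (c : Bool) (A : Fm P) :
    (cyclicOK false A → Dv P c [A] (unneck A)) ∧ (cyclicOK true A → Dv P c [unneck A] A) := by
  induction A with
  | prim _ => exact ⟨fun _ => ax c _, fun _ => ax c _⟩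
  | ldiv B C ihB ihC =>
    refine ⟨fun ⟨hB, hC⟩ => ldivR c _ _ _ ?_ (by simp), fun ⟨hB, hC⟩ => ldivR c _ _ _ ?_ (by simp)⟩
    · simpa [unneck] using ldivL c [] [] _ B C _ (ihC.1 hC) (ihB.2 hB) (by simp)
    · simpa [unneck] using ldivL c [] [] _ _ _ C (ihC.2 hC) (ihB.1 hB) (by simp)
  | rdiv B C ihB ihC =>
    refine ⟨fun ⟨hB, hC⟩ => rdivR c _ _ _ ?_ (by simp), fun ⟨hB, hC⟩ => rdivR c _ _ _ ?_ (by simp)⟩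
    · simpa [unneck] using rdivL c [] [] _ C B _ (ihB.1 hB) (ihC.2 hC) (by simp)
    · simpa [unneck] using rdivL c [] [] _ _ _ B (ihB.2 hB) (ihC.1 hC) (by simp)
  | mul B C ihB ihC =>
    refine ⟨fun ⟨hB, hC⟩ => ?_, fun ⟨hB, hC⟩ => ?_⟩
    · simpa [unneck] using
        mulL c [] [] B C _ (mulR c [B] [C] _ _ (ihB.1 hB) (ihC.1 hC) (by simp) (by simp))
    · simpa [unneck] using
        mulL c [] [] _ _ (mul B C)
          (mulR c [unneck B] [unneck C] _ _ (ihB.2 hB) (ihC.2 hC) (by simp) (by simp))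
  | circ B ihB =>
    exact ⟨fun ⟨h, _⟩ => absurd h Bool.false_ne_true, fun ⟨_, hB⟩ => circR c _ B (ihB.2 hB)⟩

theorem of_map_antecedent {f : Fm P → Fm P} {A : Fm P} :
    ∀ (Ts Γ : List (Fm P)), (∀ T ∈ Ts, Dv P true [T] (f T)) →
      Dv P true (Γ ++ Ts.map f) A → Dv P true (Γ ++ Ts) A
  | [], _, _, h => by simpa using h
  | T :: Ts, Γ, hTs, h => by
    have hT : Dv P true (Γ ++ [T] ++ Ts.map f) A :=
      cut Γ _ [T] (f T) A (hTs T (by simp)) (by simpa using h) (by simp)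
    simpa using of_map_antecedent Ts (Γ ++ [T]) (fun T' hT' => hTs T' (by simp [hT'])) hT

theorem of_unneck {Ts : List (Fm P)} {S : Fm P} (hS : cyclicOK true S)
    (hTs : ∀ T ∈ Ts, cyclicOK false T) (h : Dv P true (Ts.map unneck) (unneck S)) :
    Dv P true Ts S := by
  have hS' : Dv P true (Ts.map unneck) S := by
    simpa using cut [] [] _ _ S h (by simpa using ((unneck_of_cyclicOK true S).2 hS)) h.ne_nil
  exact of_map_antecedent Ts [] (fun T hT => (unneck_of_cyclicOK true T).1 (hTs T hT)) hS'

theorem dvCS_map_unneck {c : Bool} {Γ : List (Fm P)} {A : Fm P} (h : Dv P c Γ A) :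
    DvCS P (Γ.map unneck) (unneck A) := by
  induction h with
  | ax => exact DvCS.ax _
  | ldivL _ Γ Δ Pi A B C _ _ hne ih₁ ih₂ =>
    simpa [unneck] using
      DvCS.ldivL (Γ.map unneck) (Δ.map unneck) _ _ (unneck B) _ (by simpa using ih₁) ih₂
        (by simpa using hne)
  | ldivR _ Pi A B _ hne ih =>
    simpa [unneck] using DvCS.ldivR _ (unneck A) _ (by simpa using ih) (by simpa using hne)
  | rdivL _ Γ Δ Pi A B C _ _ hne ih₁ ih₂ =>
    simpa [unneck] using
      DvCS.rdivL (Γ.map unneck) (Δ.map unneck) _ _ (unneck B) _ (by simpa using ih₁) ih₂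
        (by simpa using hne)
  | rdivR _ Pi A B _ hne ih =>
    simpa [unneck] using DvCS.rdivR _ (unneck A) _ (by simpa using ih) (by simpa using hne)
  | mulL _ Γ Δ A B C _ ih =>
    simpa [unneck] using
      DvCS.mulL (Γ.map unneck) (Δ.map unneck) (unneck A) (unneck B) _ (by simpa using ih)
  | mulR _ Pi Psi A B _ _ hne₁ hne₂ ih₁ ih₂ =>
    simpa [unneck] using
      DvCS.mulR _ _ _ _ ih₁ ih₂ (by simpa using hne₁) (by simpa using hne₂)
  | circR _ _ _ _ ih => simpa [unneck] using ih
  | circL _ _ _ _ ih => simpa [unneck] using ih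
  | circC _ Pi Psi _ _ hne₁ hne₂ ih =>
    simpa using DvCS.cs (Pi.map unneck) (Psi.map unneck) _ (by simpa using ih)
      (by simpa using hne₁) (by simpa using hne₂)
  | cut Γ Δ Pi _ _ _ _ hne ih₁ ih₂ =>
    simpa using DvCS.cut (Γ.map unneck) (Δ.map unneck) _ _ _ ih₁ (by simpa using ih₂)
      (by simpa using hne)

end Dv

theorem List.Forall₂.exists_of_mem_right {α β : Type} {r : α → β → Prop} {l₁ : List α}
    {l₂ : List β} (h : List.Forall₂ r l₁ l₂) {b : β} (hb : b ∈ l₂) : ∃ a ∈ l₁, r a b := by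
  induction h with
  | nil => simp at hb
  | cons hab _ ih =>
    rcases List.mem_cons.1 hb with rfl | hb
    · exact ⟨_, List.mem_cons_self, hab⟩
    · obtain ⟨a, ha, hr⟩ := ih hb
      exact ⟨a, List.mem_cons_of_mem _ ha, hr⟩

section GLang

variable {α Ty Ty' : Type} {K : List Ty → Ty → Prop} {K' : List Ty' → Ty' → Prop}
  {S : Ty} {S' : Ty'} {R : List (α × Ty)} {f : Ty → Ty'}

theorem GLang_subset_GLang_map (hK : ∀ Ts, K Ts S → K' (Ts.map f) S') :
    GLang K S R ⊆ GLang K' S' (R.map fun p => (p.1, f p.2)) := by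
  rintro w ⟨hw, Ts, hR, hD⟩
  refine ⟨hw, Ts.map f, List.forall₂_map_right_iff.2 (hR.imp fun _ _ h => ?_), hK Ts hD⟩
  exact List.mem_map_of_mem h

theorem exists_forall₂_of_forall₂_mem_map :
    ∀ {w : List α} {Ts' : List Ty'},
      List.Forall₂ (fun a T => (a, T) ∈ R.map fun p => (p.1, f p.2)) w Ts' →
      ∃ Ts, List.Forall₂ (fun a T => (a, T) ∈ R) w Ts ∧ Ts' = Ts.map f
  | [], [], .nil => ⟨[], .nil, rfl⟩
  | _ :: _, _ :: _, .cons hmem hrest => by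
    obtain ⟨Ts, hR, rfl⟩ := exists_forall₂_of_forall₂_mem_map hrest
    obtain ⟨⟨a, T⟩, hp, hEq⟩ := List.mem_map.1 hmem
    obtain ⟨rfl, rfl⟩ := Prod.mk.inj hEq
    exact ⟨T :: Ts, .cons hp hR, rfl⟩

theorem GLang_map_subset_GLang {Q : Ty → Prop} (hR : ∀ p ∈ R, Q p.2)
    (hK : ∀ Ts, (∀ T ∈ Ts, Q T) → K' (Ts.map f) S' → K Ts S) :
    GLang K' S' (R.map fun p => (p.1, f p.2)) ⊆ GLang K S R := by
  rintro w ⟨hw, Ts', hR', hD⟩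
  obtain ⟨Ts, hRTs, rfl⟩ := exists_forall₂_of_forall₂_mem_map hR'
  refine ⟨hw, Ts, hRTs, hK Ts (fun T hT => ?_) hD⟩
  obtain ⟨a, -, haT⟩ := hRTs.exists_of_mem_right hT
  exact hR _ haT

end GLang

/-- For every even-cyclic `L^∘`-grammar `Gr` (distinguished type `S`
even-cyclic, all dictionary types odd-cyclic):
`L(Gr^u) ⊆ L(Gr) ⊆ L((Gr^u)^{CS})`, where `Gr^u` is obtained by deleting all
`^∘` connectives and `(Gr^u)^{CS}` is the same grammar regarded as an
`(L+(CS))`-grammar. -/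
theorem even_cyclic_grammar_bounds (α : Type) (S : Fm ℕ) (rel : List (α × Fm ℕ))
    (hS : cyclicOK true S) (hrel : ∀ p ∈ rel, cyclicOK false p.2) :
    GLang (Dv ℕ true) (unneck S) (rel.map fun p => (p.1, unneck p.2)) ⊆
        GLang (Dv ℕ true) S rel ∧
    GLang (Dv ℕ true) S rel ⊆
        GLang (DvCS ℕ) (unneck S) (rel.map fun p => (p.1, unneck p.2)) :=
  ⟨GLang_map_subset_GLang hrel fun _ => Dv.of_unneck hS,
    GLang_subset_GLang_map fun _ => Dv.dvCS_map_unneck⟩
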